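/- For every real A > 0, the limit as t → +∞ of e^t·(2π·sinh(t) − e^{-t}·A − J(2π(cosh(t) − 1) + e^{-t}·A)) equals −2A, where J(x) = 2π·sinh(cosh⁻¹(x/(2π) + 1)) is the hyperbolic isoperimetric profile. (The same holds for any real A, positive or not.) -/

import Mathlib

open Real Filter

/-- The hyperbolic isoperimetric profile
`J(x) = 2π·sinh(cosh⁻¹(x/(2π) + 1)) = 2π·√((x/(2π)+1)² − 1)`. -/
noncomputable def isoPerimProfile (x : ℝ) : ℝ :=
  2 * π * Real.sqrt ((x / (2 * π) + 1) ^ 2 - 1)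

/-!
Put `u = e^{-t}` and `x = u² = e^{-2t}`. Multiplying `2π sinh t − J(2π(cosh t − 1) + uA)` by `u`
turns it into `g(x) = π(1 − x) − 2π√(((1 + x)/2 + Ax/(2π))² − x)`, since `u·√(C² − 1) = √((uC)² − u²)`
for `C = cosh t + uA/(2π)`.
As `g(0) = 0`, the quantity in the limit is `(g(x) − g(0))/x − A`, so the limit is the derivative
`g'(0) − A = −A − A`.
-/

lemma isoPerimProfile_two_pi_mul_sub_one_add (c a : ℝ) :
    isoPerimProfile (2 * π * (c - 1) + a) = 2 * π * √((c + a / (2 * π)) ^ 2 - 1) := by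
  rw [isoPerimProfile]
  congr 4
  field_simp
  ring

lemma mul_sqrt_sq_sub_one {u : ℝ} (hu : 0 ≤ u) (c : ℝ) :
    u * √(c ^ 2 - 1) = √((u * c) ^ 2 - u ^ 2) := by
  rw [show (u * c) ^ 2 - u ^ 2 = u ^ 2 * (c ^ 2 - 1) by ring, sqrt_mul (sq_nonneg u),
    sqrt_sq hu]

noncomputable def profileGap (A x : ℝ) : ℝ :=
  π * (1 - x) - 2 * π * √(((1 + x) / 2 + A * x / (2 * π)) ^ 2 - x)

lemma profileGap_zero (A : ℝ) : profileGap A 0 = 0 := by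
  norm_num [profileGap]
  ring

lemma profileGap_exp_neg_two_mul (A t : ℝ) :
    profileGap A (exp (-2 * t)) =
      exp (-t) * (2 * π * sinh t - isoPerimProfile (2 * π * (cosh t - 1) + exp (-t) * A)) := by
  have hu : exp (-t) * exp t = 1 := by rw [← exp_add, neg_add_cancel, exp_zero]
  have hx : exp (-2 * t) = exp (-t) ^ 2 := by rw [← exp_nat_mul]; ring_nf
  have hsqrt : exp (-t) * √((cosh t + exp (-t) * A / (2 * π)) ^ 2 - 1) =
      √(((1 + exp (-2 * t)) / 2 + A * exp (-2 * t) / (2 * π)) ^ 2 - exp (-2 * t)) := by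
    rw [mul_sqrt_sq_sub_one (exp_pos _).le, hx, cosh_eq]
    congr 3
    linear_combination (1 / 2 : ℝ) * hu
  rw [isoPerimProfile_two_pi_mul_sub_one_add, profileGap, ← hsqrt, hx, sinh_eq]
  linear_combination (-π) * hu

lemma hasDerivAt_profileGap (A : ℝ) : HasDerivAt (profileGap A) (-A) 0 := by
  have hK : HasDerivAt (fun x : ℝ => ((1 + x) / 2 + A * x / (2 * π)) ^ 2 - x)
      (A / (2 * π) - 1 / 2) 0 := by
    refine (((((hasDerivAt_id' 0).const_add 1).div_const 2).fun_add
      (((hasDerivAt_id' 0).const_mul A).div_const (2 * π))).fun_pow 2 |>.fun_sub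
      (hasDerivAt_id' 0)).congr_deriv ?_
    norm_num
    ring
  have hK0 : ((1 + 0) / 2 + A * 0 / (2 * π)) ^ 2 - 0 = (1 / 2 : ℝ) ^ 2 := by ring
  refine ((((hasDerivAt_id (0 : ℝ)).const_sub 1).const_mul π).sub
    ((hK.sqrt (by rw [hK0]; norm_num)).const_mul (2 * π))).congr_deriv ?_
  rw [hK0, sqrt_sq (by norm_num)]
  field_simp
  ring

lemma exp_mul_isoperimetric_excess_eq_slope (A t : ℝ) :
    exp t * (2 * π * sinh t - exp (-t) * A
        - isoPerimProfile (2 * π * (cosh t - 1) + exp (-t) * A)) =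
      slope (profileGap A) 0 (exp (-2 * t)) - A := by
  rw [slope_def_field, profileGap_exp_neg_two_mul, profileGap_zero, sub_zero, sub_zero,
    show -2 * t = -t + -t by ring, exp_add]
  field_simp
  rw [← exp_add, add_neg_cancel, exp_zero]
  ring

/-- For every real `A`,
`lim_{t→+∞} e^t·(2π·sinh t − e^{−t}A − J(2π(cosh t − 1) + e^{−t}A)) = −2A`. -/
theorem asymptotic_isoperimetric_excess (A : ℝ) :
    Tendsto (fun t : ℝ =>
        Real.exp t * (2 * π * Real.sinh t - Real.exp (-t) * A
          - isoPerimProfile (2 * π * (Real.cosh t - 1) + Real.exp (-t) * A)))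
      atTop (nhds (-2 * A)) := by
  have hx : Tendsto (fun t : ℝ => exp (-2 * t)) atTop (nhdsWithin 0 {0}ᶜ) :=
    tendsto_nhdsWithin_iff.mpr
      ⟨tendsto_exp_atBot.comp (tendsto_id.const_mul_atTop_of_neg (by norm_num)),
        .of_forall fun t => (exp_pos _).ne'⟩
  have hslope := (hasDerivAt_iff_tendsto_slope.mp (hasDerivAt_profileGap A)).comp hx
  simp only [exp_mul_isoperimetric_excess_eq_slope]
  rw [show -2 * A = -A - A by ring]
  exact hslope.sub_const A
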